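/- arXiv:2201.02776 — 2 statements merged into one kernel-verified Lean document; each statement's English description precedes it below -/
import Mathlib

section
/- Let n ≥ 2 and let NF_n be the n-dimensional complex Leibniz algebra with basis e_1, …, e_n and nonzero products [e_i, e_1] = e_{i+1} for 1 ≤ i ≤ n−1 (all other basis products zero). Let R be an (n+1)-dimensional complex solvable Leibniz algebra whose nilradical is isomorphic to NF_n. Then R admits a basis {e_1, …, e_n, x} such that the nonzero products are exactly [e_i, e_1] = e_{i+1} for 1 ≤ i ≤ n−1, [x, e_1] = e_1, and [e_i, x] = −i·e_i for 1 ≤ i ≤ n. -/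
open Module Submodule

universe u v w

/-- A bilinear bracket on `L`. -/
abbrev Bil (L : Type u) [AddCommGroup L] [Module ℂ L] : Type u := L →ₗ[ℂ] L →ₗ[ℂ] L

variable {L : Type u} [AddCommGroup L] [Module ℂ L]

/-- The (right) Leibniz identity. -/
def IsLeibniz (br : Bil L) : Prop :=
  ∀ x y z : L, br (br x y) z = br (br x z) y + br x (br y z)

/-- The span of all brackets `[S, T]`. -/
def bspan (br : Bil L) (S T : Submodule ℂ L) : Submodule ℂ L :=
  Submodule.span ℂ {z : L | ∃ x ∈ S, ∃ y ∈ T, z = br x y}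

/-- `I` is a (two-sided) ideal of the subalgebra `S`. -/
def IsIdealIn (br : Bil L) (S I : Submodule ℂ L) : Prop :=
  I ≤ S ∧ ∀ x ∈ I, ∀ y ∈ S, br x y ∈ I ∧ br y x ∈ I

/-- `I` is a (two-sided) ideal of the whole algebra. -/
abbrev IsIdeal (br : Bil L) (I : Submodule ℂ L) : Prop := IsIdealIn br ⊤ I

/-- Lower central series of the subalgebra `S`. -/
def lcs (br : Bil L) (S : Submodule ℂ L) : ℕ → Submodule ℂ L
  | 0 => S
  | n + 1 => bspan br (lcs br S n) S

/-- The subalgebra `S` is nilpotent. -/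
def IsNilpotentSub (br : Bil L) (S : Submodule ℂ L) : Prop :=
  ∃ n, lcs br S n = ⊥

/-- Derived series of the subalgebra `S`. -/
def derS (br : Bil L) (S : Submodule ℂ L) : ℕ → Submodule ℂ L
  | 0 => S
  | n + 1 => bspan br (derS br S n) (derS br S n)

/-- The subalgebra `S` is solvable. -/
def IsSolvableSub (br : Bil L) (S : Submodule ℂ L) : Prop :=
  ∃ m, derS br S m = ⊥

/-- `N` is the nilradical (maximal nilpotent ideal) of the subalgebra `S`. -/
def IsNilradicalIn (br : Bil L) (S N : Submodule ℂ L) : Prop :=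
  IsIdealIn br S N ∧ IsNilpotentSub br N ∧
    ∀ I : Submodule ℂ L, IsIdealIn br S I → IsNilpotentSub br I → I ≤ N

/-- `N` is the nilradical of the whole algebra. -/
abbrev IsNilradical (br : Bil L) (N : Submodule ℂ L) : Prop := IsNilradicalIn br ⊤ N

/-- `N² = [N, N]`. -/
abbrev sqr (br : Bil L) (N : Submodule ℂ L) : Submodule ℂ L := bspan br N N

/-- `dim (N / N²)`. -/
noncomputable def dimModSq (br : Bil L) (N : Submodule ℂ L) : ℕ :=
  finrank ℂ (↥N ⧸ (Submodule.comap N.subtype (sqr br N)))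

/-- The subalgebra `S` splits as a direct sum of two nonzero ideals. -/
def IsSplitIn (br : Bil L) (S : Submodule ℂ L) : Prop :=
  ∃ A B : Submodule ℂ L, IsIdealIn br S A ∧ IsIdealIn br S B ∧
    A ≠ ⊥ ∧ B ≠ ⊥ ∧ A ⊓ B = ⊥ ∧ A ⊔ B = S

/-- The subalgebra `S` is abelian. -/
def IsAbelianIn (br : Bil L) (S : Submodule ℂ L) : Prop :=
  ∀ x ∈ S, ∀ y ∈ S, br x y = 0

section Two
variable {L1 : Type v} {L2 : Type w} [AddCommGroup L1] [Module ℂ L1]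
  [AddCommGroup L2] [Module ℂ L2]

/-- A bracket-preserving linear isomorphism between the subalgebra `S1` of `L1` and
the subalgebra `S2` of `L2`. -/
def SubAlgIso (br1 : Bil L1) (S1 : Submodule ℂ L1) (br2 : Bil L2) (S2 : Submodule ℂ L2) :
    Prop :=
  ∃ φ : S1 →ₗ[ℂ] L2, Function.Injective φ ∧ Set.range ⇑φ = (S2 : Set L2) ∧
    ∀ x y z : S1, (z : L1) = br1 (x : L1) (y : L1) → φ z = br2 (φ x) (φ y)

/-- An isomorphism of the two algebras. -/
def AlgIso (br1 : Bil L1) (br2 : Bil L2) : Prop :=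
  ∃ φ : L1 ≃ₗ[ℂ] L2, ∀ x y : L1, φ (br1 x y) = br2 (φ x) (φ y)

end Two

/-!
Write `N ≅ NFₙ` with basis `f₁, …, fₙ` and pick `y ∉ N`. Right multiplication by `y` is a
derivation `D` of `NFₙ`; since `f₁` generates `NFₙ`, `D` is triangular with respect to the flag
`span {fₖ, …, fₙ}` with diagonal `μ, 2μ, …, nμ`, where `D f₁ ≡ μ f₁`. If `μ = 0` that flag is
a central series of the whole algebra, which would then be nilpotent and equal to its nilradical;
so `μ ≠ 0`, and after rescaling `μ = -1`. The eigenvalues are then distinct: an eigenvector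
`e₁ ∈ f₁ + span {f₂, …, fₙ}` yields the eigenbasis `eₖ₊₁ = [eₖ, e₁]` with the table of `NFₙ`,
and correcting `y` by an element of `span {f₂, …, fₙ}` kills `[x, x]`. Finally `[x, e₁]` is an
eigenvector for `-1`, hence a multiple of `e₁`, and `[x, e₁] + [e₁, x]`, lying in the Leibniz
kernel, has no `e₁`-component, which forces `[x, e₁] = e₁`.
-/

def IsDerivation (br : Bil L) (D : Module.End ℂ L) : Prop :=
  ∀ u v, D (br u v) = br (D u) v + br u (D v)

def HasNullFiliformTable {n : ℕ} (br : Bil L) (e : Fin n → L) : Prop :=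
  ∀ i j : Fin n, br (e i) (e j) =
    if (j : ℕ) = 0 then (if h : (i : ℕ) + 1 < n then e ⟨(i : ℕ) + 1, h⟩ else 0) else 0

def rightAnnihilator (br : Bil L) : Submodule ℂ L := ⨅ a, LinearMap.ker (br a)

lemma mem_rightAnnihilator {br : Bil L} {z : L} : z ∈ rightAnnihilator br ↔ ∀ a, br a z = 0 := by
  simp [rightAnnihilator]

def leibnizKernel (br : Bil L) : Submodule ℂ L := span ℂ (Set.range fun w => br w w)

lemma add_swap_mem_leibnizKernel (br : Bil L) (a b : L) : br a b + br b a ∈ leibnizKernel br := by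
  have : br a b + br b a = br (a + b) (a + b) - br a a - br b b := by
    simp only [map_add, LinearMap.add_apply]; abel
  rw [this]
  exact sub_mem (sub_mem (subset_span ⟨_, rfl⟩) (subset_span ⟨_, rfl⟩)) (subset_span ⟨_, rfl⟩)

namespace IsLeibniz

variable {br : Bil L}

lemma leibnizKernel_le_rightAnnihilator (h : IsLeibniz br) :
    leibnizKernel br ≤ rightAnnihilator br :=
  span_le.2 <| Set.range_subset_iff.2 fun w => mem_rightAnnihilator.2 fun a => by
    simpa using h a w w

lemma isIdeal_leibnizKernel (h : IsLeibniz br) : IsIdeal br (leibnizKernel br) := by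
  refine ⟨le_top, fun k hk y _ => ⟨?_, ?_⟩⟩
  · induction hk using span_induction with
    | mem _ hx =>
      obtain ⟨w, rfl⟩ := hx
      rw [h w w y]
      exact add_swap_mem_leibnizKernel br _ _
    | zero => simp
    | add _ _ _ _ hx hy => simpa using add_mem hx hy
    | smul c _ _ hx => simpa using smul_mem _ c hx
  · rw [mem_rightAnnihilator.1 (h.leibnizKernel_le_rightAnnihilator hk)]
    exact zero_mem _

lemma isNilpotentSub_leibnizKernel (h : IsLeibniz br) : IsNilpotentSub br (leibnizKernel br) :=
  ⟨1, eq_bot_iff.2 <| span_le.2 <| by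
    rintro _ ⟨a, -, b, hb, rfl⟩
    exact mem_rightAnnihilator.1 (h.leibnizKernel_le_rightAnnihilator hb) a⟩

lemma leibnizKernel_le {N : Submodule ℂ L} (h : IsLeibniz br) (hN : IsNilradical br N) :
    leibnizKernel br ≤ N :=
  hN.2.2 _ h.isIdeal_leibnizKernel h.isNilpotentSub_leibnizKernel

end IsLeibniz

lemma isNilpotentSub_top_of_filtration {br : Bil L} (G : ℕ → Submodule ℂ L)
    (h₁ : ∀ a b, br a b ∈ G 1) (hG : ∀ k, ∀ a ∈ G (k + 1), ∀ b, br a b ∈ G (k + 2)) {m : ℕ}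
    (hm : G (m + 1) = ⊥) : IsNilpotentSub br ⊤ := by
  have hlcs : ∀ k, lcs br ⊤ (k + 1) ≤ G (k + 1) := fun k => by
    induction k with
    | zero => exact span_le.2 fun _ ⟨a, _, b, _, hab⟩ => hab ▸ h₁ a b
    | succ k ih => exact span_le.2 fun _ ⟨a, ha, b, _, hab⟩ => hab ▸ hG k a (ih ha) b
  exact ⟨m + 1, eq_bot_iff.2 (hm ▸ hlcs m)⟩

namespace NullFiliform

variable {n : ℕ}

def shift (n : ℕ) : (Fin n → ℂ) →ₗ[ℂ] Fin n → ℂ where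
  toFun u i := if h : (i : ℕ) = 0 then 0 else u ⟨i - 1, by omega⟩
  map_add' u v := by ext i; by_cases h : (i : ℕ) = 0 <;> simp [h]
  map_smul' c u := by ext i; by_cases h : (i : ℕ) = 0 <;> simp [h]

lemma shift_apply_zero [NeZero n] (u : Fin n → ℂ) : shift n u 0 = 0 := by
  simp [shift]

lemma shift_apply_succ (u : Fin n → ℂ) (i : Fin n) (h : (i : ℕ) + 1 < n) :
    shift n u ⟨i + 1, h⟩ = u i := by
  simp [shift]

lemma shift_single (i : Fin n) :
    shift n (Pi.single i 1) = if h : (i : ℕ) + 1 < n then Pi.single ⟨i + 1, h⟩ 1 else 0 := by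
  split_ifs with h <;> ext j <;>
    simp only [shift, LinearMap.coe_mk, AddHom.coe_mk, Pi.single_apply, Fin.ext_iff,
      Pi.zero_apply] <;> split_ifs <;> first | rfl | omega

/-- `NFₙ` on `ℂⁿ`, coordinate `0` standing for `e₁`: `[eᵢ, e₁] = eᵢ₊₁`. -/
def bracket (n : ℕ) [NeZero n] : Bil (Fin n → ℂ) :=
  LinearMap.mk₂ ℂ (fun u v => v 0 • shift n u) (fun _ _ _ => by simp)
    (fun c _ _ => by simp only [map_smul]; exact smul_comm _ c _)
    (fun _ _ _ => by simp [add_smul]) (fun _ _ _ => by simp [mul_smul])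

@[simp] lemma bracket_apply [NeZero n] (u v : Fin n → ℂ) : bracket n u v = v 0 • shift n u := rfl

/-- `filtration n k` is the `(k + 1)`-st term of the lower central series of `NFₙ`. -/
def filtration (n k : ℕ) : Submodule ℂ (Fin n → ℂ) where
  carrier := {v | ∀ j : Fin n, (j : ℕ) < k → v j = 0}
  add_mem' hu hv j hj := by simp [hu j hj, hv j hj]
  zero_mem' _ _ := rfl
  smul_mem' c _ hv j hj := by simp [hv j hj]

lemma filtration_zero : filtration n 0 = ⊤ :=
  eq_top_iff.2 fun _ _ _ hj => absurd hj (Nat.not_lt_zero _)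

lemma filtration_antitone : Antitone (filtration n) := fun _ _ hkl _ hv j hj => hv j (by omega)

lemma filtration_eq_bot {k : ℕ} (hk : n ≤ k) : filtration n k = ⊥ :=
  eq_bot_iff.2 fun v hv => (Submodule.mem_bot ℂ).2 (funext fun j => hv j (by omega))

lemma mem_filtration_one_iff [NeZero n] {v : Fin n → ℂ} : v ∈ filtration n 1 ↔ v 0 = 0 :=
  ⟨fun hv => hv 0 Nat.one_pos,
    fun hv j hj => by rwa [show j = 0 from Fin.ext (Nat.lt_one_iff.1 hj)]⟩

lemma mem_filtration_succ {k : ℕ} {v : Fin n → ℂ} (hv : v ∈ filtration n k) (i : Fin n)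
    (hi : (i : ℕ) = k) (hvi : v i = 0) : v ∈ filtration n (k + 1) := fun j hj => by
  rcases Nat.lt_succ_iff_lt_or_eq.1 hj with hj | hj
  · exact hv j hj
  · rwa [Fin.ext (hj.trans hi.symm)]

lemma shift_mem_filtration {k : ℕ} {u : Fin n → ℂ} (hu : u ∈ filtration n k) :
    shift n u ∈ filtration n (k + 1) := fun j hj => by
  unfold shift
  dsimp only [LinearMap.coe_mk, AddHom.coe_mk]
  split_ifs with h
  · rfl
  · exact hu _ (by simp; omega)

lemma exists_shift_eq {k : ℕ} {v : Fin n → ℂ} (hv : v ∈ filtration n (k + 1)) :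
    ∃ u ∈ filtration n k, shift n u = v := by
  refine ⟨fun i => if h : (i : ℕ) + 1 < n then v ⟨i + 1, h⟩ else 0, fun j hj => ?_,
    funext fun i => ?_⟩
  · dsimp only
    split_ifs with h
    · exact hv _ (by simp; omega)
    · rfl
  · unfold shift
    dsimp only [LinearMap.coe_mk, AddHom.coe_mk]
    split_ifs with h h'
    · exact (hv i (by omega)).symm
    · congr 1; ext; simp; omega
    · omega

lemma shift_pow_mem_filtration (k : ℕ) (u : Fin n → ℂ) : (shift n ^ k) u ∈ filtration n k := by
  induction k with
  | zero => simp [filtration_zero]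
  | succ k ih => rw [pow_succ', Module.End.mul_apply]; exact shift_mem_filtration ih

lemma shift_pow_apply_self [NeZero n] (u : Fin n → ℂ) (i : Fin n) :
    (shift n ^ (i : ℕ)) u i = u 0 := by
  obtain ⟨k, hk⟩ := i
  induction k with
  | zero => rfl
  | succ k ih =>
    rw [pow_succ', Module.End.mul_apply]
    exact (shift_apply_succ _ ⟨k, by omega⟩ hk).trans (ih (by omega))

lemma eq_bracket_of_hasNullFiliformTable [NeZero n] {br₀ : Bil (Fin n → ℂ)}
    (h : HasNullFiliformTable br₀ fun i => Pi.single i 1) : br₀ = bracket n :=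
  (Pi.basisFun ℂ (Fin n)).ext fun i => (Pi.basisFun ℂ (Fin n)).ext fun j => by
    rw [Pi.basisFun_apply, Pi.basisFun_apply, h i j, bracket_apply, shift_single]
    by_cases hj : (j : ℕ) = 0
    · obtain rfl : j = 0 := Fin.ext hj
      simp
    · rw [if_neg hj, Pi.single_eq_of_ne (fun h => hj (by rw [← h]; rfl)), zero_smul]

lemma hasNullFiliformTable_shift_pow [NeZero n] {E : Fin n → ℂ} (hE : E 0 = 1) :
    HasNullFiliformTable (bracket n) fun i : Fin n => (shift n ^ (i : ℕ)) E := by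
  intro i j
  have hj : (shift n ^ (j : ℕ)) E 0 = if (j : ℕ) = 0 then 1 else 0 := by
    split_ifs with hj
    · simpa [hj] using hE
    · exact shift_pow_mem_filtration (j : ℕ) E 0 (Nat.pos_of_ne_zero hj)
  dsimp only
  rw [bracket_apply, hj, ← Module.End.mul_apply, ← pow_succ']
  split_ifs with h₀ hi
  · simp
  · rw [one_smul, ← Submodule.mem_bot ℂ, ← filtration_eq_bot (n := n) (by omega : n ≤ i + 1)]
    exact shift_pow_mem_filtration _ E
  · simp

section Triangular

variable {T : Module.End ℂ (Fin n → ℂ)} {a : ℕ → ℂ} {c : ℂ} {k : ℕ}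

lemma eq_zero_of_apply_eq_smul
    (hT : ∀ k, ∀ v ∈ filtration n k, T v - a k • v ∈ filtration n (k + 1))
    (hc : ∀ j, k ≤ j → j < n → a j ≠ c) {v : Fin n → ℂ} (hv : v ∈ filtration n k)
    (hTv : T v = c • v) : v = 0 := by
  suffices ∀ j, k ≤ j → v ∈ filtration n j by
    simpa [filtration_eq_bot (le_max_right k n)] using this _ (le_max_left k n)
  refine Nat.le_induction hv fun j hkj hj => ?_
  by_cases hjn : j < n
  · have h := hT j v hj
    rw [hTv, ← sub_smul] at h
    exact mem_filtration_succ hj ⟨j, hjn⟩ rfl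
      ((mul_eq_zero.1 (h ⟨j, hjn⟩ (Nat.lt_succ_self j))).resolve_left
        (sub_ne_zero.2 (hc j hkj hjn).symm))
  · rw [filtration_eq_bot (by omega)] at hj ⊢
    exact hj

lemma exists_mem_filtration_apply_sub_smul_eq
    (hT : ∀ k, ∀ v ∈ filtration n k, T v - a k • v ∈ filtration n (k + 1))
    (hc : ∀ j, k ≤ j → j < n → a j ≠ c) {u : Fin n → ℂ} (hu : u ∈ filtration n k) :
    ∃ v ∈ filtration n k, T v - c • v = u := by
  have hmaps : ∀ v ∈ filtration n k, (T - c • 1) v ∈ filtration n k := fun v hv => by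
    have : (T - c • 1) v = (T v - a k • v) + (a k - c) • v := by simp [sub_smul]
    rw [this]
    exact add_mem (filtration_antitone (Nat.le_succ k) (hT k v hv)) (smul_mem _ _ hv)
  have hinj : Function.Injective ((T - c • 1).restrict hmaps) := by
    rw [← LinearMap.ker_eq_bot, LinearMap.ker_eq_bot']
    rintro ⟨v, hv⟩ h
    have h' : T v = c • v := by
      simpa [sub_eq_zero, Subtype.ext_iff, LinearMap.restrict_apply] using h
    exact Subtype.ext (eq_zero_of_apply_eq_smul hT hc hv h')
  obtain ⟨⟨v, hv⟩, h⟩ := LinearMap.injective_iff_surjective.1 hinj ⟨u, hu⟩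
  exact ⟨v, hv, by simpa [Subtype.ext_iff, LinearMap.restrict_apply] using h⟩

end Triangular

section Derivation

variable [NeZero n] {D : Module.End ℂ (Fin n → ℂ)}

lemma apply_shift_of_isDerivation (hD : IsDerivation (bracket n) D) (u : Fin n → ℂ) :
    D (shift n u) = shift n (D u) + D (Pi.single 0 1) 0 • shift n u := by
  simpa using hD u (Pi.single 0 1)

lemma apply_sub_smul_mem_filtration_one (hD : IsDerivation (bracket n) D) (u : Fin n → ℂ) :
    D u - D (Pi.single 0 1) 0 • u ∈ filtration n 1 := by
  obtain ⟨w, -, hw⟩ := exists_shift_eq (k := 0)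
    (mem_filtration_one_iff.2 (by simp : (u - u 0 • Pi.single 0 1 : Fin n → ℂ) 0 = 0))
  have hu : u = u 0 • Pi.single 0 1 + shift n w := by rw [hw]; abel
  have : D u - D (Pi.single 0 1) 0 • u =
      u 0 • (D (Pi.single 0 1) - D (Pi.single 0 1) 0 • Pi.single 0 1) + shift n (D w) := by
    rw [hu, map_add, map_smul, apply_shift_of_isDerivation hD]
    simp only [Pi.add_apply, Pi.smul_apply, Pi.single_eq_same, shift_apply_zero]
    module
  rw [this]
  exact add_mem (smul_mem _ _ (mem_filtration_one_iff.2 (by simp)))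
    (shift_mem_filtration (k := 0) (by simp [filtration_zero]))

lemma apply_sub_smul_mem_filtration (hD : IsDerivation (bracket n) D) (k : ℕ) (v : Fin n → ℂ)
    (hv : v ∈ filtration n k) :
    D v - ((k + 1) * D (Pi.single 0 1) 0) • v ∈ filtration n (k + 1) := by
  induction k generalizing v with
  | zero => simpa using apply_sub_smul_mem_filtration_one hD v
  | succ k ih =>
    obtain ⟨u, hu, rfl⟩ := exists_shift_eq hv
    have : D (shift n u) - (((k + 1 : ℕ) + 1) * D (Pi.single 0 1) 0) • shift n u =
        shift n (D u - ((k + 1) * D (Pi.single 0 1) 0) • u) := by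
      rw [apply_shift_of_isDerivation hD, map_sub, map_smul]
      push_cast
      module
    rw [this]
    exact shift_mem_filtration (ih u hu)

lemma apply_mem_filtration_succ (hD : IsDerivation (bracket n) D) (hμ : D (Pi.single 0 1) 0 = 0)
    {k : ℕ} {v : Fin n → ℂ} (hv : v ∈ filtration n k) : D v ∈ filtration n (k + 1) := by
  simpa [hμ] using apply_sub_smul_mem_filtration hD k v hv

lemma apply_shift_pow (hD : IsDerivation (bracket n) D) {c : ℂ} {v : Fin n → ℂ}
    (hv : D v = c • v) (k : ℕ) :
    D ((shift n ^ k) v) = (c + k * D (Pi.single 0 1) 0) • (shift n ^ k) v := by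
  induction k with
  | zero => simpa using hv
  | succ k ih =>
    rw [pow_succ', Module.End.mul_apply, apply_shift_of_isDerivation hD, ih, map_smul]
    push_cast
    module

lemma natCast_add_one_mul_ne_self {μ : ℂ} (hμ : μ ≠ 0) {j : ℕ} (hj : 1 ≤ j) :
    (j + 1) * μ ≠ μ := fun h =>
  hμ <| (mul_eq_zero.1 (by linear_combination h : (j : ℂ) * μ = 0)).resolve_left
    (Nat.cast_ne_zero.2 (by omega))

lemma exists_eigenvector (hD : IsDerivation (bracket n) D) (hμ : D (Pi.single 0 1) 0 ≠ 0) :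
    ∃ E : Fin n → ℂ, E 0 = 1 ∧ D E = D (Pi.single 0 1) 0 • E := by
  obtain ⟨w, hw, hDw⟩ := exists_mem_filtration_apply_sub_smul_eq
    (apply_sub_smul_mem_filtration hD) (k := 1)
    (fun j hj _ => natCast_add_one_mul_ne_self hμ hj)
    (neg_mem (apply_sub_smul_mem_filtration_one hD (Pi.single 0 1)))
  refine ⟨Pi.single 0 1 + w, by simp [mem_filtration_one_iff.1 hw], ?_⟩
  rw [map_add]
  linear_combination (norm := module) hDw

lemma eq_smul_of_apply_eq_smul (hD : IsDerivation (bracket n) D) (hμ : D (Pi.single 0 1) 0 ≠ 0)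
    {E v : Fin n → ℂ} (hE : E 0 = 1) (hDE : D E = D (Pi.single 0 1) 0 • E)
    (hDv : D v = D (Pi.single 0 1) 0 • v) : v = v 0 • E :=
  sub_eq_zero.1 <| eq_zero_of_apply_eq_smul (apply_sub_smul_mem_filtration hD) (k := 1)
    (fun j hj _ => natCast_add_one_mul_ne_self hμ hj)
    (mem_filtration_one_iff.2 (by simp [hE])) (by rw [map_sub, map_smul, hDv, hDE]; module)

lemma exists_mem_filtration_one_apply_eq (hD : IsDerivation (bracket n) D)
    (hμ : D (Pi.single 0 1) 0 ≠ 0) {q : Fin n → ℂ} (hq : q ∈ filtration n 1) :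
    ∃ m ∈ filtration n 1, D m = q := by
  obtain ⟨m, hm, hDm⟩ := exists_mem_filtration_apply_sub_smul_eq
    (apply_sub_smul_mem_filtration hD) (c := 0)
    (fun j _ _ => mul_ne_zero (Nat.cast_add_one_ne_zero j) hμ) hq
  exact ⟨m, hm, by simpa using hDm⟩

end Derivation

structure IsEmbedding [NeZero n] (br : Bil L) (N : Submodule ℂ L) (ψ : (Fin n → ℂ) →ₗ[ℂ] L) :
    Prop where
  injective : Function.Injective ψ
  range_eq : LinearMap.range ψ = N
  map_bracket : ∀ u v, ψ (bracket n u v) = br (ψ u) (ψ v)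

lemma exists_isEmbedding [NeZero n] {br₀ : Bil (Fin n → ℂ)} {br : Bil L} {N : Submodule ℂ L}
    (h₀ : HasNullFiliformTable br₀ fun i => Pi.single i 1) (h : SubAlgIso br₀ ⊤ br N) :
    ∃ ψ : (Fin n → ℂ) →ₗ[ℂ] L, IsEmbedding br N ψ := by
  obtain ⟨φ, hinj, hrange, hmul⟩ := h
  obtain rfl := eq_bracket_of_hasNullFiliformTable h₀
  refine ⟨φ ∘ₗ Submodule.topEquiv.symm.toLinearMap,
    ⟨hinj.comp Submodule.topEquiv.symm.injective, ?_,
      fun u v => hmul (topEquiv.symm u) (topEquiv.symm v) (topEquiv.symm _) rfl⟩⟩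
  rw [LinearMap.range_comp, LinearEquiv.range, Submodule.map_top]
  exact SetLike.ext' (by rw [LinearMap.coe_range, hrange])

namespace IsEmbedding

variable [NeZero n] {br : Bil L} {N : Submodule ℂ L} {ψ : (Fin n → ℂ) →ₗ[ℂ] L}

lemma br_apply_apply (hψ : IsEmbedding br N ψ) (u v : Fin n → ℂ) :
    br (ψ u) (ψ v) = v 0 • ψ (shift n u) := by
  rw [← hψ.map_bracket, bracket_apply, map_smul]

lemma finrank_eq (hψ : IsEmbedding br N ψ) : finrank ℂ N = n := by
  rw [← hψ.range_eq, LinearMap.finrank_range_of_inj hψ.injective, finrank_fin_fun]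

lemma exists_eq_add_smul [FiniteDimensional ℂ L] (hψ : IsEmbedding br N ψ)
    (hdim : finrank ℂ L = n + 1) {y : L} (hy : y ∉ N) (a : L) :
    ∃ (u : Fin n → ℂ) (t : ℂ), a = ψ u + t • y := by
  have htop : N ⊔ span ℂ {y} = ⊤ := Submodule.eq_top_of_finrank_eq
    (by rw [finrank_sup_span_singleton hy, hψ.finrank_eq, hdim])
  obtain ⟨b, hb, c, hc, rfl⟩ := Submodule.mem_sup.1 (htop ▸ mem_top : a ∈ N ⊔ span ℂ {y})
  obtain ⟨u, rfl⟩ := hψ.range_eq ▸ hb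
  obtain ⟨t, rfl⟩ := mem_span_singleton.1 hc
  exact ⟨u, t, rfl⟩

lemma hasNullFiliformTable_comp (hψ : IsEmbedding br N ψ) {E : Fin n → Fin n → ℂ}
    (h : HasNullFiliformTable (bracket n) E) : HasNullFiliformTable br (ψ ∘ E) := fun i j => by
  simp only [Function.comp_apply, ← hψ.map_bracket, h i j]
  split_ifs <;> simp

lemma mem_rightAnnihilator_iff (hleib : IsLeibniz br) (hψ : IsEmbedding br N ψ) (hn : 2 ≤ n)
    {v : Fin n → ℂ} : ψ v ∈ rightAnnihilator br ↔ v 0 = 0 := by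
  set e₀ : Fin n → ℂ := Pi.single 0 1
  constructor
  · intro hv
    have hshift : shift n e₀ ≠ 0 := fun h => by
      simpa [h, e₀] using shift_apply_succ e₀ 0 (by simp; omega)
    have h := mem_rightAnnihilator.1 hv (ψ e₀)
    rw [hψ.br_apply_apply, smul_eq_zero, map_eq_zero_iff ψ hψ.injective] at h
    exact h.resolve_right hshift
  · intro hv
    obtain ⟨w, -, rfl⟩ := exists_shift_eq (k := 0) (mem_filtration_one_iff.2 hv)
    have : ψ (shift n w) = (br (ψ w) (ψ e₀) + br (ψ e₀) (ψ w)) - w 0 • br (ψ e₀) (ψ e₀) := by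
      simp [hψ.br_apply_apply, e₀]
    rw [this]
    exact hleib.leibnizKernel_le_rightAnnihilator
      (sub_mem (add_swap_mem_leibnizKernel br _ _) (smul_mem _ _ (subset_span ⟨_, rfl⟩)))

lemma br_apply_eq_smul (hleib : IsLeibniz br) (hψ : IsEmbedding br N ψ) (hn : 2 ≤ n) (a : L)
    (v : Fin n → ℂ) : br a (ψ v) = v 0 • br a (ψ (Pi.single 0 1)) := by
  have h := mem_rightAnnihilator.1
    ((hψ.mem_rightAnnihilator_iff hleib hn (v := v - v 0 • Pi.single 0 1)).2 (by simp)) a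
  rwa [map_sub, map_smul, map_sub, map_smul, sub_eq_zero] at h

lemma exists_add_swap_eq (hleib : IsLeibniz br) (hN : IsNilradical br N)
    (hψ : IsEmbedding br N ψ) (hn : 2 ≤ n) (a b : L) :
    ∃ w : Fin n → ℂ, w 0 = 0 ∧ ψ w = br a b + br b a := by
  have hab := add_swap_mem_leibnizKernel br a b
  obtain ⟨w, hw⟩ : br a b + br b a ∈ LinearMap.range ψ :=
    hψ.range_eq ▸ hleib.leibnizKernel_le hN hab
  refine ⟨w, (hψ.mem_rightAnnihilator_iff hleib hn).1 ?_, hw⟩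
  rw [hw]
  exact hleib.leibnizKernel_le_rightAnnihilator hab

lemma exists_rightMul (hψ : IsEmbedding br N ψ) (hN : IsIdeal br N) (z : L) :
    ∃ D : Module.End ℂ (Fin n → ℂ), ∀ v, ψ (D v) = br (ψ v) z := by
  have hmem : ∀ v, (br.flip z ∘ₗ ψ) v ∈ LinearMap.range ψ := fun v =>
    hψ.range_eq ▸ (hN.2 _ (hψ.range_eq ▸ LinearMap.mem_range_self ψ v) z trivial).1
  exact ⟨(LinearEquiv.ofInjective ψ hψ.injective).symm.toLinearMap ∘ₗ
    (br.flip z ∘ₗ ψ).codRestrict _ hmem, fun v => by simp⟩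

lemma isDerivation_of_rightMul (hleib : IsLeibniz br) (hψ : IsEmbedding br N ψ) {z : L}
    {D : Module.End ℂ (Fin n → ℂ)} (hD : ∀ v, ψ (D v) = br (ψ v) z) :
    IsDerivation (bracket n) D := fun u v =>
  hψ.injective <| by simp only [hD, map_add, hψ.map_bracket, hleib _ _ z]

lemma br_mem_map_filtration_one [FiniteDimensional ℂ L] (hleib : IsLeibniz br)
    (hN : IsNilradical br N) (hψ : IsEmbedding br N ψ) (hn : 2 ≤ n)
    (hdim : finrank ℂ L = n + 1) {y : L} (hy : y ∉ N) {D : Module.End ℂ (Fin n → ℂ)}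
    (hD : ∀ v, ψ (D v) = br (ψ v) y) (hμ : D (Pi.single 0 1) 0 = 0) (a b : L) :
    br a b ∈ (filtration n 1).map ψ := by
  obtain ⟨u, s, rfl⟩ := hψ.exists_eq_add_smul hdim hy a
  obtain ⟨v, t, rfl⟩ := hψ.exists_eq_add_smul hdim hy b
  obtain ⟨w₁, hw₁, hw₁'⟩ := hψ.exists_add_swap_eq hleib hN hn (ψ (Pi.single 0 1)) y
  obtain ⟨w₂, hw₂, hw₂'⟩ := hψ.exists_add_swap_eq hleib hN hn y y
  have hy₀ : br y (ψ (Pi.single 0 1)) = ψ (w₁ - D (Pi.single 0 1)) := by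
    rw [map_sub, hw₁', hD]; abel
  have hyy : br y y = ψ ((2 : ℂ)⁻¹ • w₂) := by
    rw [map_smul, hw₂']; module
  have : br (ψ u + s • y) (ψ v + t • y) = v 0 • ψ (shift n u) + t • ψ (D u) +
      (s * v 0) • ψ (w₁ - D (Pi.single 0 1)) + (s * t) • ψ ((2 : ℂ)⁻¹ • w₂) := by
    simp only [map_add, map_smul, LinearMap.add_apply, LinearMap.smul_apply,
      hψ.br_apply_apply, hD, hψ.br_apply_eq_smul hleib hn y v, hy₀, hyy]
    module
  rw [this]
  refine add_mem (add_mem (add_mem ?_ ?_) ?_) ?_ <;> refine smul_mem _ _ (mem_map_of_mem ?_)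
  · exact shift_mem_filtration (k := 0) (by simp [filtration_zero])
  · exact apply_mem_filtration_succ (hψ.isDerivation_of_rightMul hleib hD) hμ (k := 0)
      (by simp [filtration_zero])
  · exact mem_filtration_one_iff.2 (by simp [hw₁, hμ])
  · exact mem_filtration_one_iff.2 (by simp [hw₂])

/-- Were `D e₁` without `e₁`-component, the image of the filtration would be a central series
of the whole algebra. -/
lemma rightMul_apply_ne_zero [FiniteDimensional ℂ L] (hleib : IsLeibniz br)
    (hN : IsNilradical br N) (hψ : IsEmbedding br N ψ) (hn : 2 ≤ n)
    (hdim : finrank ℂ L = n + 1) {y : L} (hy : y ∉ N) {D : Module.End ℂ (Fin n → ℂ)}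
    (hD : ∀ v, ψ (D v) = br (ψ v) y) : D (Pi.single 0 1) 0 ≠ 0 := by
  intro hμ
  have hstep : ∀ k, ∀ a ∈ (filtration n (k + 1)).map ψ, ∀ b,
      br a b ∈ (filtration n (k + 2)).map ψ := by
    rintro k _ ⟨u, hu, rfl⟩ b
    obtain ⟨v, t, rfl⟩ := hψ.exists_eq_add_smul hdim hy b
    rw [map_add, map_smul, hψ.br_apply_apply, ← hD]
    exact add_mem (smul_mem _ _ (mem_map_of_mem (shift_mem_filtration hu)))
      (smul_mem _ _ (mem_map_of_mem
        (apply_mem_filtration_succ (hψ.isDerivation_of_rightMul hleib hD) hμ hu)))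
  have hnil := isNilpotentSub_top_of_filtration (fun k => (filtration n k).map ψ)
    (hψ.br_mem_map_filtration_one hleib hN hn hdim hy hD hμ) hstep (m := n)
    (by rw [filtration_eq_bot (by omega), Submodule.map_bot])
  exact hy (hN.2.2 ⊤ ⟨le_rfl, fun _ _ _ _ => ⟨trivial, trivial⟩⟩ hnil trivial)

lemma exists_br_self_eq_zero (hleib : IsLeibniz br) (hN : IsNilradical br N)
    (hψ : IsEmbedding br N ψ) (hn : 2 ≤ n) {x₀ : L} {T : Module.End ℂ (Fin n → ℂ)}
    (hT : ∀ v, ψ (T v) = br (ψ v) x₀) (hμ : T (Pi.single 0 1) 0 ≠ 0) :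
    ∃ x, x - x₀ ∈ N ∧ br x x = 0 ∧ ∀ v, ψ (T v) = br (ψ v) x := by
  obtain ⟨q, hq, hq'⟩ := hψ.exists_add_swap_eq hleib hN hn x₀ x₀
  obtain ⟨m, hm, hTm⟩ := exists_mem_filtration_one_apply_eq
    (hψ.isDerivation_of_rightMul hleib hT) hμ
    (neg_mem (smul_mem _ (2⁻¹ : ℂ) (mem_filtration_one_iff.2 hq)))
  have hψm : ∀ a, br a (ψ m) = 0 := mem_rightAnnihilator.1
    ((hψ.mem_rightAnnihilator_iff hleib hn).2 (mem_filtration_one_iff.1 hm))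
  refine ⟨x₀ + ψ m, by simp [← hψ.range_eq], ?_, fun v => by rw [map_add, hψm, add_zero, hT]⟩
  rw [map_add, hψm, add_zero, map_add, LinearMap.add_apply, ← hT, hTm, map_neg, map_smul, hq']
  module

lemma br_apply_eigenvector (hleib : IsLeibniz br) (hN : IsNilradical br N)
    (hψ : IsEmbedding br N ψ) (hn : 2 ≤ n) {x : L} (hxx : br x x = 0)
    {T : Module.End ℂ (Fin n → ℂ)} (hT : ∀ v, ψ (T v) = br (ψ v) x)
    (hT₀ : T (Pi.single 0 1) 0 = -1) {E : Fin n → ℂ} (hE : E 0 = 1) (hTE : T E = -E) :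
    br x (ψ E) = ψ E := by
  obtain ⟨v, hv⟩ : br x (ψ E) ∈ LinearMap.range ψ :=
    hψ.range_eq ▸ (hN.1.2 _ (hψ.range_eq ▸ LinearMap.mem_range_self ψ E) x trivial).2
  -- `[[x, ψ E], x] = [[x, x], ψ E] + [x, [ψ E, x]] = -[x, ψ E]`
  have hTv : T v = T (Pi.single 0 1) 0 • v := hψ.injective <| by
    rw [hT, hv, hleib, hxx, ← hT, hTE, hT₀, map_neg, map_neg, map_zero, LinearMap.zero_apply,
      zero_add, map_smul, hv, neg_one_smul]
  have hvE := eq_smul_of_apply_eq_smul (hψ.isDerivation_of_rightMul hleib hT)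
    (by rw [hT₀]; norm_num) hE (by rw [hTE, hT₀]; simp) hTv
  obtain ⟨w, hw, hw'⟩ := hψ.exists_add_swap_eq hleib hN hn x (ψ E)
  rw [← hv, ← hT, hTE, ← map_add, hvE] at hw'
  have h1 : v 0 = 1 := by
    have h := congrFun (hψ.injective hw') 0
    simp only [hw, Pi.add_apply, Pi.smul_apply, Pi.neg_apply, hE, smul_eq_mul, mul_one] at h
    linear_combination -h
  rw [← hv, hvE, h1, one_smul]

lemma exists_normal_basis (hleib : IsLeibniz br) (hN : IsNilradical br N)
    (hψ : IsEmbedding br N ψ) (hn : 2 ≤ n) {x : L} (hx : x ∉ N) (hxx : br x x = 0)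
    {T : Module.End ℂ (Fin n → ℂ)} (hT : ∀ v, ψ (T v) = br (ψ v) x)
    (hT₀ : T (Pi.single 0 1) 0 = -1) :
    ∃ e : Fin n → L, LinearIndependent ℂ (Sum.elim e fun _ : Unit => x) ∧
      HasNullFiliformTable br e ∧
      (∀ j : Fin n, br x (e j) = if (j : ℕ) = 0 then e j else 0) ∧
      (∀ i : Fin n, br (e i) x = (-(((i : ℕ) + 1 : ℕ) : ℂ)) • e i) := by
  have hTD := hψ.isDerivation_of_rightMul hleib hT
  obtain ⟨E, hE, hTE⟩ := exists_eigenvector hTD (by rw [hT₀]; norm_num)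
  have hTE' : T E = -E := by rw [hTE, hT₀, neg_one_smul]
  set e : Fin n → L := fun i => ψ ((shift n ^ (i : ℕ)) E)
  have hxe : ∀ i, br (e i) x = (-(((i : ℕ) + 1 : ℕ) : ℂ)) • e i := fun i => by
    rw [← hT, apply_shift_pow hTD hTE, hT₀, map_smul]
    congr 2
    push_cast
    ring
  have he : ∀ i, e i ≠ 0 := fun i h => by
    have h' := congrFun ((map_eq_zero_iff ψ hψ.injective).1 h) i
    rw [shift_pow_apply_self, hE] at h'
    exact one_ne_zero h'
  refine ⟨e, ?_, hψ.hasNullFiliformTable_comp (hasNullFiliformTable_shift_pow hE), ?_, hxe⟩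
  · refine Module.End.eigenvectors_linearIndependent' (br.flip x)
      (Sum.elim (fun i : Fin n => -(((i : ℕ) + 1 : ℕ) : ℂ)) fun _ => 0) ?_ _ ?_
    · rintro (i | _) (j | _) h <;> simp only [Sum.elim_inl, Sum.elim_inr, neg_inj, neg_eq_zero,
        zero_eq_neg, Nat.cast_inj, Nat.add_right_cancel_iff, Nat.cast_eq_zero] at h
      exacts [congrArg Sum.inl (Fin.ext h), absurd h i.val.succ_ne_zero,
        absurd h j.val.succ_ne_zero, rfl]
    · rintro (i | _)
      · exact ⟨Module.End.mem_eigenspace_iff.2 (hxe i), he i⟩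
      · exact ⟨Module.End.mem_eigenspace_iff.2 (by simpa using hxx), fun h => hx (by simp_all)⟩
  · intro j
    split_ifs with hj
    · obtain rfl : j = 0 := Fin.ext hj
      exact hψ.br_apply_eigenvector hleib hN hn hxx hT hT₀ hE hTE'
    · rw [hψ.br_apply_eq_smul hleib hn,
        shift_pow_mem_filtration (j : ℕ) E 0 (Nat.pos_of_ne_zero hj), zero_smul]

end IsEmbedding

end NullFiliform

/-- Indices are `0`-based: `e i` is the basis vector `e_{i+1}` of the statement. -/
theorem stmt14_general {L : Type u} [AddCommGroup L] [Module ℂ L] [FiniteDimensional ℂ L]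
    (n : ℕ) (hn : 2 ≤ n)
    (br0 : Bil (Fin n → ℂ))
    (hbr0 : ∀ i j : Fin n, br0 (Pi.single i 1) (Pi.single j 1) =
      if (j : ℕ) = 0 then
        (if h : (i : ℕ) + 1 < n then Pi.single (⟨(i : ℕ) + 1, h⟩ : Fin n) 1 else 0)
      else 0)
    (br : Bil L) (hleib : IsLeibniz br)
    (hdim : finrank ℂ L = n + 1)
    (N : Submodule ℂ L) (hN : IsNilradical br N)
    (hiso : SubAlgIso br0 ⊤ br N) :
    ∃ (e : Fin n → L) (x : L),
      LinearIndependent ℂ (Sum.elim e (fun _ : Unit => x)) ∧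
      Submodule.span ℂ (Set.range (Sum.elim e (fun _ : Unit => x))) = ⊤ ∧
      (∀ i j : Fin n, br (e i) (e j) =
        if (j : ℕ) = 0 then
          (if h : (i : ℕ) + 1 < n then e ⟨(i : ℕ) + 1, h⟩ else 0)
        else 0) ∧
      (∀ j : Fin n, br x (e j) = if (j : ℕ) = 0 then e j else 0) ∧
      (∀ i : Fin n, br (e i) x = (-(((i : ℕ) + 1 : ℕ) : ℂ)) • e i) ∧
      br x x = 0 := by
  have : NeZero n := ⟨by omega⟩
  obtain ⟨ψ, hψ⟩ := NullFiliform.exists_isEmbedding hbr0 hiso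
  obtain ⟨y, hy⟩ := SetLike.exists_not_mem_of_ne_top N fun h => by
    have := hψ.finrank_eq
    rw [h, finrank_top, hdim] at this
    omega
  obtain ⟨D, hD⟩ := hψ.exists_rightMul hN.1 y
  have hμ := hψ.rightMul_apply_ne_zero hleib hN hn hdim hy hD
  set μ := D (Pi.single 0 1) 0
  have hT : ∀ v, ψ ((-μ⁻¹ • D) v) = br (ψ v) (-μ⁻¹ • y) := fun v => by simp [hD]
  have hT₀ : (-μ⁻¹ • D) (Pi.single 0 1) 0 = -1 := by simp [μ, hμ]
  obtain ⟨x, hxN, hxx, hTx⟩ := hψ.exists_br_self_eq_zero hleib hN hn hT (by simp [hT₀])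
  have hx : x ∉ N := fun h => hy <| by simpa [hμ] using smul_mem N (-μ) (sub_mem h hxN)
  obtain ⟨e, hli, htable, hxe, hex⟩ := hψ.exists_normal_basis hleib hN hn hx hxx hTx hT₀
  exact ⟨e, x, hli, hli.span_eq_top_of_card_eq_finrank' (by simp [hdim]), htable, hxe, hex, hxx⟩

/-- Theorem 5.10, from Example 5.9. Any `(n+1)`-dimensional solvable
Leibniz algebra whose nilradical is the null-filiform algebra
`NFₙ : [e_i, e_1] = e_{i+1}` admits a basis `{e_1, …, e_n, x}` with the indicated table
(indices are written `0`-based: `e_{i+1} ↦ e i`). -/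
theorem stmt14 {L : Type u} [AddCommGroup L] [Module ℂ L] [FiniteDimensional ℂ L]
    (n : ℕ) (hn : 2 ≤ n)
    (br0 : Bil (Fin n → ℂ))
    (hbr0 : ∀ i j : Fin n, br0 (Pi.single i 1) (Pi.single j 1) =
      if (j : ℕ) = 0 then
        (if h : (i : ℕ) + 1 < n then Pi.single (⟨(i : ℕ) + 1, h⟩ : Fin n) 1 else 0)
      else 0)
    (br : Bil L) (hleib : IsLeibniz br) (hsolv : IsSolvableSub br (⊤ : Submodule ℂ L))
    (hdim : finrank ℂ L = n + 1)
    (N : Submodule ℂ L) (hN : IsNilradical br N)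
    (hiso : SubAlgIso br0 ⊤ br N) :
    ∃ (e : Fin n → L) (x : L),
      LinearIndependent ℂ (Sum.elim e (fun _ : Unit => x)) ∧
      Submodule.span ℂ (Set.range (Sum.elim e (fun _ : Unit => x))) = ⊤ ∧
      (∀ i j : Fin n, br (e i) (e j) =
        if (j : ℕ) = 0 then
          (if h : (i : ℕ) + 1 < n then e ⟨(i : ℕ) + 1, h⟩ else 0)
        else 0) ∧
      (∀ j : Fin n, br x (e j) = if (j : ℕ) = 0 then e j else 0) ∧
      (∀ i : Fin n, br (e i) x = (-(((i : ℕ) + 1 : ℕ) : ℂ)) • e i) ∧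
      br x x = 0 :=
  stmt14_general n hn br0 hbr0 br hleib hdim N hN hiso
end

section
/- Let L be a 5-dimensional complex solvable Leibniz algebra whose nilradical is the 3-dimensional Leibniz algebra with basis {e_1, e_2, e_3} and unique nonzero product [e_2, e_1] = e_3. Then there exists a basis {e_1, e_2, e_3, x_1, x_2} of L whose nonzero products are exactly: [e_2,e_1] = e_3, [e_1,x_1] = e_1, [x_1,e_1] = −e_1, [e_2,x_2] = e_2, [e_3,x_1] = e_3, [e_3,x_2] = e_3. -/
/-!
Right multiplications are derivations, so right multiplication by any `x` preserves the nilradical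
`N` and acts on its frame `e 0, e 1, e 2` by a triangular matrix with diagonal
`(α x, β x, α x + β x)`; the weight `(α, β) : L → ℂ²` vanishes on `N` and on `[L, L]`. Squares
`[y, y]` span an abelian ideal and so lie in `N`; hence an `x ∉ N` of weight zero with
`[L, L] ⊆ N + ℂ x` would make `N + ℂ x` a nilpotent ideal. Together with solvability and a
dimension count this gives `[L, L] ⊆ N` and `ker (α, β) = N`, so the weight maps onto `ℂ²`.
Lifts `X₁, X₂` of the standard basis, corrected by multiples of `e 0`, act diagonally on the
shifted frame `e 0 + c • e 2, e 1, e 2`. The Leibniz identity then forces `[x, e 1] = [x, e 2] = 0`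
and `[x, e 0] = -α x • e 0 + ⋯` for every `x`, and correcting the `Xᵢ` by multiples of `e 1` and
`e 2` kills the products `[Xᵢ, Xⱼ]`.
-/

open Module Submodule

universe u v w

variable {L : Type u} [AddCommGroup L] [Module ℂ L]

/-- The multiplication table of Proposition 5.7 on the basis
`e₁ ↦ v 0`, `e₂ ↦ v 1`, `e₃ ↦ v 2`, `x₁ ↦ v 3`, `x₂ ↦ v 4`:
`[e₂,e₁] = e₃`, `[e₁,x₁] = e₁`, `[x₁,e₁] = -e₁`, `[e₂,x₂] = e₂`, `[e₃,x₁] = e₃`,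
`[e₃,x₂] = e₃`, all other products zero. -/
def table17 {W : Type v} [AddCommGroup W] [Module ℂ W]
    (v : Fin 5 → W) (i j : Fin 5) : W :=
  if i = 1 ∧ j = 0 then v 2
  else if i = 0 ∧ j = 3 then v 0
  else if i = 3 ∧ j = 0 then -v 0
  else if i = 1 ∧ j = 4 then v 1
  else if i = 2 ∧ j = 3 then v 2
  else if i = 2 ∧ j = 4 then v 2
  else 0

section Brackets

variable {br : Bil L}

theorem bspan_eq_map₂ (S T : Submodule ℂ L) : bspan br S T = map₂ br S T := by
  rw [map₂_eq_span_image2, bspan]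
  congr 1
  ext z
  simp only [Set.mem_image2, SetLike.mem_coe]
  grind

theorem br_mem_bspan_top (x y : L) : br x y ∈ bspan br ⊤ ⊤ :=
  subset_span ⟨x, mem_top, y, mem_top, rfl⟩

theorem IsIdeal.br_mem {I : Submodule ℂ L} (hI : IsIdeal br I) {n : L} (hn : n ∈ I) (x : L) :
    br n x ∈ I ∧ br x n ∈ I :=
  hI.2 n hn x mem_top

theorem isIdeal_of_bspan_top_le {U : Submodule ℂ L} (h : bspan br ⊤ ⊤ ≤ U) : IsIdeal br U :=
  ⟨le_top, fun x _ y _ => ⟨h (br_mem_bspan_top x y), h (br_mem_bspan_top y x)⟩⟩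

theorem isNilpotentSub_of_map₂_le {U A B : Submodule ℂ L} (hU : map₂ br U U ≤ A)
    (hA : map₂ br A U ≤ B) (hB : map₂ br B U = ⊥) : IsNilpotentSub br U := by
  refine ⟨3, eq_bot_iff.2 ?_⟩
  simp only [lcs, bspan_eq_map₂]
  calc map₂ br (map₂ br (map₂ br U U) U) U ≤ map₂ br (map₂ br A U) U :=
        map₂_le_map₂_left (map₂_le_map₂_left hU)
    _ ≤ map₂ br B U := map₂_le_map₂_left hA
    _ = ⊥ := hB

theorem eq_top_of_bspan_sup_eq_top {N : Submodule ℂ L} (hsolv : IsSolvableSub br ⊤)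
    (hN : IsIdeal br N) (h : bspan br ⊤ ⊤ ⊔ N = ⊤) : N = ⊤ := by
  obtain ⟨m, hm⟩ := hsolv
  have hNL : ∀ S, map₂ br N S ≤ N := fun S => map₂_le.2 fun x hx y _ => (hN.br_mem hx y).1
  have hLN : ∀ S, map₂ br S N ≤ N := fun S => map₂_le.2 fun y _ x hx => (hN.br_mem hx y).2
  have key : ∀ k, derS br ⊤ k ⊔ N = ⊤ := by
    intro k
    induction k with
    | zero => exact top_unique le_sup_left
    | succ k ih =>
      refine top_unique (h.symm.trans_le (sup_le ?_ le_sup_right))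
      change bspan br ⊤ ⊤ ≤ bspan br (derS br ⊤ k) (derS br ⊤ k) ⊔ N
      rw [bspan_eq_map₂, bspan_eq_map₂]
      conv_lhs => rw [← ih, map₂_sup_left, map₂_sup_right, map₂_sup_right]
      exact sup_le (sup_le le_sup_left (le_sup_of_le_right (hLN _)))
        (le_sup_of_le_right (sup_le (hNL _) (hNL _)))
  simpa [hm] using key m

namespace IsLeibniz

theorem br_br_self (hleib : IsLeibniz br) (x y : L) : br x (br y y) = 0 := by
  simpa using hleib x y y

theorem br_br_add_br_swap (hleib : IsLeibniz br) (x y z : L) :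
    br x (br y z + br z y) = 0 := by
  have h := hleib.br_br_self x (y + z)
  simp only [map_add, LinearMap.add_apply, hleib.br_br_self, zero_add, add_zero] at h
  rwa [map_add, add_comm]

theorem br_self_mem_of_isNilradical (hleib : IsLeibniz br) {N : Submodule ℂ L}
    (hN : IsNilradical br N) (x : L) : br x x ∈ N := by
  set I := span ℂ {z | ∃ y, z = br y y}
  have hsq : ∀ y, br y y ∈ I := fun y => subset_span ⟨y, rfl⟩
  have hleft : ∀ y, ∀ i ∈ I, br y i = 0 := by
    intro y i hi
    refine span_induction ?_ (map_zero _) (fun _ _ _ _ ha hb => by rw [map_add, ha, hb, add_zero])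
      (fun c _ _ ha => by rw [map_smul, ha, smul_zero]) hi
    rintro _ ⟨z, rfl⟩
    exact hleib.br_br_self y z
  -- `[[y, y], z] = [u, y] + [y, u]` with `u = [y, z]`, a sum of squares by polarization
  have hright : ∀ z, ∀ i ∈ I, br i z ∈ I := by
    intro z i hi
    refine span_induction ?_ (by simp) (fun _ _ _ _ ha hb => by simpa using add_mem ha hb)
      (fun c _ _ ha => by simpa using smul_mem _ c ha) hi
    rintro _ ⟨y, rfl⟩
    have hpol : br (br y y) z =
        br (br y z + y) (br y z + y) - br (br y z) (br y z) - br y y := by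
      rw [hleib]; simp only [map_add, LinearMap.add_apply]; abel
    rw [hpol]
    exact sub_mem (sub_mem (hsq _) (hsq _)) (hsq _)
  have hI : IsIdeal br I :=
    ⟨le_top, fun i hi y _ => ⟨hright y i hi, by rw [hleft y i hi]; exact zero_mem _⟩⟩
  have hnil : IsNilpotentSub br I := by
    refine ⟨1, eq_bot_iff.2 ?_⟩
    simp only [lcs, bspan_eq_map₂]
    exact map₂_le.2 fun a _ b hb => by rw [hleft a b hb]; exact zero_mem _
  exact hN.2.2 I hI hnil (hsq x)

end IsLeibniz

end Brackets

-- `e 0, e 1, e 2` play the role of the paper's `e₁, e₂, e₃`.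
def IsFrame (br : Bil L) (e : Fin 3 → L) : Prop :=
  ∀ i j, br (e i) (e j) = if i = 1 ∧ j = 0 then e 2 else 0

def IsDualFamily (f : Fin 3 → Module.Dual ℂ L) (e : Fin 3 → L) : Prop :=
  ∀ i j, f i (e j) = if i = j then 1 else 0

theorem exists_isDualFamily {e : Fin 3 → L} (hli : LinearIndependent ℂ e) :
    ∃ f : Fin 3 → Module.Dual ℂ L, IsDualFamily f e := by
  obtain ⟨g, hg⟩ := LinearMap.exists_extend (Basis.span hli).equivFun.toLinearMap
  refine ⟨fun i => LinearMap.proj i ∘ₗ g, fun i j => ?_⟩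
  have hej : g (e j) = Finsupp.single j 1 := by
    simpa [Basis.span_apply] using LinearMap.congr_fun hg (Basis.span hli j)
  simp [hej, Finsupp.single_apply, eq_comm]

theorem exists_isFrame_of_subAlgIso {br : Bil L} {br3 : Bil (Fin 3 → ℂ)} {N : Submodule ℂ L}
    (hbr3 : ∀ i j : Fin 3, br3 (Pi.single i 1) (Pi.single j 1) =
      if i = 1 ∧ j = 0 then Pi.single (2 : Fin 3) 1 else 0)
    (hiso : SubAlgIso br3 ⊤ br N) :
    ∃ e : Fin 3 → L,
      LinearIndependent ℂ e ∧ span ℂ (Set.range e) = N ∧ IsFrame br e := by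
  obtain ⟨φ, hinj, hrange, hφ⟩ := hiso
  set ψ := φ ∘ₗ (Submodule.topEquiv (R := ℂ) (M := Fin 3 → ℂ)).symm.toLinearMap
  have hψ : Function.Injective ψ := hinj.comp Submodule.topEquiv.symm.injective
  have hψbr : ∀ x y, ψ (br3 x y) = br (ψ x) (ψ y) := fun x y => hφ _ _ _ rfl
  refine ⟨ψ ∘ Pi.basisFun ℂ (Fin 3), (Pi.basisFun ℂ _).linearIndependent.map'
    ψ (LinearMap.ker_eq_bot.2 hψ), ?_, fun i j => ?_⟩
  · rw [Set.range_comp, ← map_span, (Pi.basisFun ℂ _).span_eq, Submodule.map_top]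
    exact SetLike.coe_injective ((LinearMap.coe_range ψ).trans (by
      rw [LinearMap.coe_comp, Set.range_comp, LinearEquiv.coe_coe,
        topEquiv.symm.surjective.range_eq, Set.image_univ, hrange]))
  · simp only [Function.comp_apply, Pi.basisFun_apply, ← hψbr, hbr3]
    split_ifs <;> simp

section Frame

variable {br : Bil L} {e : Fin 3 → L} {f : Fin 3 → Module.Dual ℂ L}

theorem mem_span_range_self (i : Fin 3) : e i ∈ span ℂ (Set.range e) :=
  subset_span ⟨i, rfl⟩

theorem IsDualFamily.smul_eq_zero_iff (hf : IsDualFamily f e) {c : ℂ} (i : Fin 3) :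
    c • e i = 0 ↔ c = 0 :=
  ⟨fun h => by simpa [hf _ _] using congrArg (f i) h, fun h => by rw [h, zero_smul]⟩

theorem IsDualFamily.eq_of_mem_span (hf : IsDualFamily f e) {n : L}
    (hn : n ∈ span ℂ (Set.range e)) : n = f 0 n • e 0 + f 1 n • e 1 + f 2 n • e 2 := by
  obtain ⟨c, rfl⟩ := (mem_span_range_iff_exists_fun ℂ).1 hn
  simp [Fin.sum_univ_three, hf _ _]

theorem IsFrame.br_one_zero (hbr : IsFrame br e) : br (e 1) (e 0) = e 2 := by
  simp [hbr _ _]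

theorem IsFrame.br_e_zero_of_mem (hbr : IsFrame br e) (hf : IsDualFamily f e) {n : L}
    (hn : n ∈ span ℂ (Set.range e)) : br (e 0) n = 0 := by
  rw [hf.eq_of_mem_span hn]
  simp [hbr _ _]

theorem IsFrame.br_e_one_of_mem (hbr : IsFrame br e) (hf : IsDualFamily f e) {n : L}
    (hn : n ∈ span ℂ (Set.range e)) : br (e 1) n = f 0 n • e 2 := by
  conv_lhs => rw [hf.eq_of_mem_span hn]
  simp [hbr _ _]

theorem IsFrame.br_of_mem_e_zero (hbr : IsFrame br e) (hf : IsDualFamily f e) {n : L}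
    (hn : n ∈ span ℂ (Set.range e)) : br n (e 0) = f 1 n • e 2 := by
  conv_lhs => rw [hf.eq_of_mem_span hn]
  simp [hbr _ _]

theorem IsFrame.br_of_mem_e_one (hbr : IsFrame br e) (hf : IsDualFamily f e) {n : L}
    (hn : n ∈ span ℂ (Set.range e)) : br n (e 1) = 0 := by
  rw [hf.eq_of_mem_span hn]
  simp [hbr _ _]

theorem IsFrame.br_e_zero_eq (hleib : IsLeibniz br) (hbr : IsFrame br e) (hf : IsDualFamily f e)
    (hI : IsIdeal br (span ℂ (Set.range e))) (x : L) :
    br (e 0) x = f 0 (br (e 0) x) • e 0 + f 2 (br (e 0) x) • e 2 := by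
  have hn := (hI.br_mem (mem_span_range_self 0) x).1
  have h := hleib (e 0) (e 0) x
  rw [hbr.br_of_mem_e_zero hf hn, hbr.br_e_zero_of_mem hf hn, hbr 0 0] at h
  have h1 : f 1 (br (e 0) x) = 0 := (hf.smul_eq_zero_iff 2).1 (by simpa using h.symm)
  conv_lhs => rw [hf.eq_of_mem_span hn, h1, zero_smul, add_zero]

theorem IsFrame.br_e_one_eq (hleib : IsLeibniz br) (hbr : IsFrame br e) (hf : IsDualFamily f e)
    (hI : IsIdeal br (span ℂ (Set.range e))) (x : L) :
    br (e 1) x = f 1 (br (e 1) x) • e 1 + f 2 (br (e 1) x) • e 2 := by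
  have hn := (hI.br_mem (mem_span_range_self 1) x).1
  have h := hleib (e 1) (e 1) x
  rw [hbr.br_of_mem_e_one hf hn, hbr.br_e_one_of_mem hf hn, hbr 1 1] at h
  have h0 : f 0 (br (e 1) x) = 0 := (hf.smul_eq_zero_iff 2).1 (by simpa using h.symm)
  conv_lhs => rw [hf.eq_of_mem_span hn, h0, zero_smul, zero_add]

theorem IsFrame.br_e_two_eq (hleib : IsLeibniz br) (hbr : IsFrame br e) (hf : IsDualFamily f e)
    (hI : IsIdeal br (span ℂ (Set.range e))) (x : L) :
    br (e 2) x = (f 0 (br (e 0) x) + f 1 (br (e 1) x)) • e 2 := by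
  have h := hleib (e 1) (e 0) x
  rw [hbr.br_of_mem_e_zero hf (hI.br_mem (mem_span_range_self 1) x).1,
    hbr.br_e_one_of_mem hf (hI.br_mem (mem_span_range_self 0) x).1, hbr 1 0] at h
  simpa [add_smul, add_comm] using h

theorem IsFrame.br_e_two_right (hleib : IsLeibniz br) (hbr : IsFrame br e) (x : L) :
    br x (e 2) = 0 := by
  simpa [hbr _ _] using hleib.br_br_add_br_swap x (e 1) (e 0)

theorem IsFrame.f_zero_br_eq_zero (hleib : IsLeibniz br) (hbr : IsFrame br e)
    (hf : IsDualFamily f e) (hL2 : bspan br ⊤ ⊤ ≤ span ℂ (Set.range e)) {x y : L}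
    (hx : ∃ b : ℂ, br (e 1) x = b • e 1) (hy : ∃ b : ℂ, br (e 1) y = b • e 1) :
    f 0 (br x y) = 0 := by
  obtain ⟨b, hb⟩ := hx
  obtain ⟨b', hb'⟩ := hy
  have h := hleib (e 1) x y
  rw [hb, hb', hbr.br_e_one_of_mem hf (hL2 (br_mem_bspan_top _ _)), map_smul, map_smul,
    LinearMap.smul_apply, LinearMap.smul_apply, hb, hb', smul_smul, smul_smul, mul_comm,
    left_eq_add] at h
  exact (hf.smul_eq_zero_iff 2).1 h

theorem IsFrame.shift (hbr : IsFrame br e) (c : ℂ) : IsFrame br ![e 0 + c • e 2, e 1, e 2] := by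
  intro i j
  fin_cases i <;> fin_cases j <;> simp [hbr _ _]

theorem LinearIndependent.shift (hli : LinearIndependent ℂ e) (c : ℂ) :
    LinearIndependent ℂ ![e 0 + c • e 2, e 1, e 2] := by
  rw [Fintype.linearIndependent_iff] at hli ⊢
  intro g hg
  have h := hli ![g 0, g 1, c * g 0 + g 2] (by
    simp only [Fin.sum_univ_three, Matrix.cons_val] at hg ⊢
    linear_combination (norm := module) hg)
  have h0 : g 0 = 0 := h 0
  intro i
  fin_cases i
  · exact h0
  · exact h 1
  · simpa [h0] using h 2

theorem span_range_shift (c : ℂ) :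
    span ℂ (Set.range ![e 0 + c • e 2, e 1, e 2]) = span ℂ (Set.range e) := by
  apply le_antisymm <;> rw [span_le, Set.range_subset_iff] <;> intro i <;> fin_cases i
  · exact add_mem (mem_span_range_self 0) (smul_mem _ _ (mem_span_range_self 2))
  · exact mem_span_range_self 1
  · exact mem_span_range_self 2
  · simpa using sub_mem (mem_span_range_self (e := ![e 0 + c • e 2, e 1, e 2]) 0)
      (smul_mem _ c (mem_span_range_self 2))
  · exact mem_span_range_self 1
  · exact mem_span_range_self 2

end Frame

-- The diagonal entries at `e 0` and `e 1` of right multiplication by `x` in the frame `e`.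
def frameWeight (br : Bil L) (e : Fin 3 → L) (f : Fin 3 → Module.Dual ℂ L) :
    L →ₗ[ℂ] ℂ × ℂ :=
  (f 0 ∘ₗ br (e 0)).prod (f 1 ∘ₗ br (e 1))

section Weight

variable {br : Bil L} {e : Fin 3 → L} {f : Fin 3 → Module.Dual ℂ L}

theorem frameWeight_apply (x : L) :
    frameWeight br e f x = (f 0 (br (e 0) x), f 1 (br (e 1) x)) := rfl

theorem frameWeight_eq_zero_of_mem (hbr : IsFrame br e) (hf : IsDualFamily f e) {n : L}
    (hn : n ∈ span ℂ (Set.range e)) : frameWeight br e f n = 0 := by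
  simp [frameWeight_apply, hbr.br_e_zero_of_mem hf hn, hbr.br_e_one_of_mem hf hn, hf _ _]

theorem frameWeight_br (hleib : IsLeibniz br) (hbr : IsFrame br e) (hf : IsDualFamily f e)
    (hI : IsIdeal br (span ℂ (Set.range e))) (x y : L) : frameWeight br e f (br x y) = 0 := by
  have h0 := congrArg (f 0) (hleib (e 0) x y)
  have h1 := congrArg (f 1) (hleib (e 1) x y)
  rw [hbr.br_e_zero_eq hleib hf hI x, hbr.br_e_zero_eq hleib hf hI y] at h0
  rw [hbr.br_e_one_eq hleib hf hI x, hbr.br_e_one_eq hleib hf hI y] at h1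
  simp only [map_add, map_smul, LinearMap.add_apply, LinearMap.smul_apply,
    hbr.br_e_two_eq hleib hf hI, smul_eq_mul, hf _ _, Fin.reduceEq, if_false,
    mul_zero, add_zero] at h0 h1
  simp only [frameWeight_apply, Prod.mk_eq_zero]
  constructor
  · linear_combination -h0
  · linear_combination -h1

theorem isNilpotentSub_span_insert (hleib : IsLeibniz br) (hbr : IsFrame br e)
    (hf : IsDualFamily f e) (hN : IsNilradical br (span ℂ (Set.range e))) {x : L}
    (hx : frameWeight br e f x = 0) : IsNilpotentSub br (span ℂ (insert x (Set.range e))) := by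
  have hI : IsIdeal br _ := hN.1
  simp only [frameWeight_apply, Prod.mk_eq_zero] at hx
  have h0 : br (e 0) x = f 2 (br (e 0) x) • e 2 := by
    conv_lhs => rw [hbr.br_e_zero_eq hleib hf hI x, hx.1, zero_smul, zero_add]
  have h1 : br (e 1) x = f 2 (br (e 1) x) • e 2 := by
    conv_lhs => rw [hbr.br_e_one_eq hleib hf hI x, hx.2, zero_smul, zero_add]
  have h2 : br (e 2) x = 0 := by
    rw [hbr.br_e_two_eq hleib hf hI x, hx.1, hx.2, add_zero, zero_smul]
  refine isNilpotentSub_of_map₂_le (A := span ℂ (Set.range e)) (B := ℂ ∙ e 2) ?_ ?_ ?_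
  · simp only [map₂_span_span, span_le, Set.image2_subset_iff, Set.forall_mem_insert,
      Set.forall_mem_range, SetLike.mem_coe]
    refine ⟨⟨hleib.br_self_mem_of_isNilradical hN x,
      fun j => (hI.br_mem (mem_span_range_self j) x).2⟩,
      fun i => ⟨(hI.br_mem (mem_span_range_self i) x).1, fun j => ?_⟩⟩
    rw [hbr i j]
    split_ifs
    exacts [mem_span_range_self 2, zero_mem _]
  · simp only [map₂_span_span, span_le, Set.image2_subset_iff, Set.forall_mem_insert,
      Set.forall_mem_range, SetLike.mem_coe]
    refine fun i => ⟨?_, fun j => ?_⟩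
    · fin_cases i
      · exact h0 ▸ smul_mem _ _ (mem_span_singleton_self _)
      · exact h1 ▸ smul_mem _ _ (mem_span_singleton_self _)
      · exact h2 ▸ zero_mem _
    · rw [hbr i j]
      split_ifs
      exacts [mem_span_singleton_self _, zero_mem _]
  · simp only [map₂_span_span, span_eq_bot, Set.mem_image2, Set.mem_singleton_iff,
      Set.mem_insert_iff, Set.mem_range]
    rintro _ ⟨_, rfl, y, hy | ⟨j, rfl⟩, rfl⟩
    · rw [hy, h2]
    · simp [hbr _ _]

theorem mem_of_frameWeight_eq_zero (hleib : IsLeibniz br) (hbr : IsFrame br e)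
    (hf : IsDualFamily f e) (hN : IsNilradical br (span ℂ (Set.range e))) {x : L}
    (hx : frameWeight br e f x = 0) (hL2 : bspan br ⊤ ⊤ ≤ span ℂ (insert x (Set.range e))) :
    x ∈ span ℂ (Set.range e) :=
  hN.2.2 _ (isIdeal_of_bspan_top_le hL2) (isNilpotentSub_span_insert hleib hbr hf hN hx)
    (subset_span (Set.mem_insert x _))

theorem bspan_top_le_of_isSolvableSub [FiniteDimensional ℂ L] (hleib : IsLeibniz br)
    (hsolv : IsSolvableSub br ⊤) (hbr : IsFrame br e) (hf : IsDualFamily f e)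
    (hN : IsNilradical br (span ℂ (Set.range e)))
    (hdim : finrank ℂ L = finrank ℂ (span ℂ (Set.range e)) + 2) :
    bspan br ⊤ ⊤ ≤ span ℂ (Set.range e) := by
  set N := span ℂ (Set.range e)
  have hI : IsIdeal br N := hN.1
  set V := bspan br ⊤ ⊤ ⊔ N
  have hVtop : V ≠ ⊤ := fun h => by
    rw [eq_top_of_bspan_sup_eq_top hsolv hI h, finrank_top] at hdim
    omega
  have hVker : V ≤ LinearMap.ker (frameWeight br e f) := by
    refine sup_le ?_ fun n hn => frameWeight_eq_zero_of_mem hbr hf hn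
    rw [bspan_eq_map₂]
    exact map₂_le.2 fun y _ z _ => frameWeight_br hleib hbr hf hI y z
  by_contra hc
  obtain ⟨x, hx, hxN⟩ := SetLike.not_le_iff_exists.1 hc
  have hxV : x ∈ V := mem_sup_left hx
  have hle : span ℂ (insert x (Set.range e)) ≤ V := by
    rw [span_insert]
    exact sup_le ((span_singleton_le_iff_mem _ _).2 hxV) le_sup_right
  have hlt : N < span ℂ (insert x (Set.range e)) :=
    lt_of_le_of_ne (span_mono (Set.subset_insert _ _))
      fun h => hxN (h ▸ subset_span (Set.mem_insert _ _))
  have hV : span ℂ (insert x (Set.range e)) = V := by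
    refine eq_of_le_of_finrank_le hle ?_
    have := finrank_lt_finrank_of_lt hlt
    have := finrank_lt hVtop
    omega
  exact hxN (mem_of_frameWeight_eq_zero hleib hbr hf hN (hVker hxV) (hV ▸ le_sup_left))

theorem frameWeight_surjective [FiniteDimensional ℂ L] (hleib : IsLeibniz br)
    (hsolv : IsSolvableSub br ⊤) (hbr : IsFrame br e) (hf : IsDualFamily f e)
    (hN : IsNilradical br (span ℂ (Set.range e)))
    (hdim : finrank ℂ L = finrank ℂ (span ℂ (Set.range e)) + 2) :
    Function.Surjective (frameWeight br e f) := by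
  have hL2 := bspan_top_le_of_isSolvableSub hleib hsolv hbr hf hN hdim
  have hker : LinearMap.ker (frameWeight br e f) ≤ span ℂ (Set.range e) := fun x hx =>
    mem_of_frameWeight_eq_zero hleib hbr hf hN hx (hL2.trans (span_mono (Set.subset_insert _ _)))
  rw [← LinearMap.range_eq_top]
  apply eq_top_of_finrank_eq
  have := (frameWeight br e f).finrank_range_add_finrank_ker
  have := finrank_mono hker
  have := (LinearMap.range (frameWeight br e f)).finrank_le
  simp only [finrank_prod, finrank_self] at *
  omega

end Weight

def IsDiagonalPair (br : Bil L) (e : Fin 3 → L) (X₁ X₂ : L) : Prop :=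
  (∀ i, br (e i) X₁ = if i = 1 then 0 else e i) ∧
    ∀ i, br (e i) X₂ = if i = 0 then 0 else e i

section DiagonalPair

variable {br : Bil L} {e : Fin 3 → L} {f : Fin 3 → Module.Dual ℂ L} {X₁ X₂ : L}

theorem exists_isDiagonalPair (hleib : IsLeibniz br) (hbr : IsFrame br e) (hf : IsDualFamily f e)
    (hI : IsIdeal br (span ℂ (Set.range e))) (hL2 : bspan br ⊤ ⊤ ≤ span ℂ (Set.range e))
    (hsurj : Function.Surjective (frameWeight br e f)) :
    ∃ (c : ℂ) (X₁ X₂ : L), IsDiagonalPair br ![e 0 + c • e 2, e 1, e 2] X₁ X₂ := by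
  -- subtracting a multiple of `e 0` removes the `e 2`-component of `[e 1, y]`
  have hnorm : ∀ p : ℂ × ℂ, ∃ (X : L) (γ : ℂ), br (e 0) X = p.1 • e 0 + γ • e 2 ∧
      br (e 1) X = p.2 • e 1 ∧ br (e 2) X = (p.1 + p.2) • e 2 := by
    intro p
    obtain ⟨y, hy⟩ := hsurj p
    simp only [frameWeight_apply, Prod.ext_iff] at hy
    refine ⟨y - f 2 (br (e 1) y) • e 0, f 2 (br (e 0) y), ?_, ?_, ?_⟩
    · rw [map_sub, map_smul, hbr 0 0, hbr.br_e_zero_eq hleib hf hI, hy.1]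
      simp [hf _ _]
    · rw [map_sub, map_smul, hbr 1 0, hbr.br_e_one_eq hleib hf hI, hy.2]
      simp [hf _ _]
    · rw [map_sub, map_smul, hbr 2 0, hbr.br_e_two_eq hleib hf hI, hy.1, hy.2]
      simp
  obtain ⟨X₁, γ₁, h₁₀, h₁₁, h₁₂⟩ := hnorm (1, 0)
  obtain ⟨X₂, γ₂, h₂₀, h₂₁, h₂₂⟩ := hnorm (0, 1)
  have hγ₁ : γ₁ = 0 := by
    have h := hleib (e 0) X₁ X₂
    rw [hbr.br_e_zero_of_mem hf (hL2 (br_mem_bspan_top X₁ X₂)), h₁₀, h₂₀] at h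
    simp only [map_add, map_smul, LinearMap.add_apply, LinearMap.smul_apply,
      h₁₀, h₂₀, h₁₂, h₂₂] at h
    exact (hf.smul_eq_zero_iff 2).1 (by linear_combination (norm := module) h)
  refine ⟨-γ₂, X₁, X₂, fun i => ?_, fun i => ?_⟩ <;> fin_cases i <;>
    simp [h₁₀, h₁₁, h₁₂, h₂₀, h₂₁, h₂₂, hγ₁]

theorem IsDiagonalPair.exists_br_e_one_X₁ (hX : IsDiagonalPair br e X₁ X₂) :
    ∃ b : ℂ, br (e 1) X₁ = b • e 1 :=
  ⟨0, by simp [hX.1 1]⟩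

theorem IsDiagonalPair.exists_br_e_one_X₂ (hX : IsDiagonalPair br e X₁ X₂) :
    ∃ b : ℂ, br (e 1) X₂ = b • e 1 :=
  ⟨1, by simp [hX.2 1]⟩

theorem IsDiagonalPair.br_of_mem_X₁ (hX : IsDiagonalPair br e X₁ X₂) (hf : IsDualFamily f e)
    {n : L} (hn : n ∈ span ℂ (Set.range e)) : br n X₁ = f 0 n • e 0 + f 2 n • e 2 := by
  conv_lhs => rw [hf.eq_of_mem_span hn]
  simp [hX.1 _]

theorem IsDiagonalPair.br_of_mem_X₂ (hX : IsDiagonalPair br e X₁ X₂) (hf : IsDualFamily f e)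
    {n : L} (hn : n ∈ span ℂ (Set.range e)) : br n X₂ = f 1 n • e 1 + f 2 n • e 2 := by
  conv_lhs => rw [hf.eq_of_mem_span hn]
  simp [hX.2 _]

theorem IsDiagonalPair.br_e_one_right (hX : IsDiagonalPair br e X₁ X₂) (hleib : IsLeibniz br)
    (hbr : IsFrame br e) (hf : IsDualFamily f e) (hL2 : bspan br ⊤ ⊤ ≤ span ℂ (Set.range e))
    (x : L) : br x (e 1) = 0 := by
  have hn := hL2 (br_mem_bspan_top x (e 1))
  have h0 := hleib x (e 1) (e 0)
  rw [hbr.br_of_mem_e_zero hf hn, hbr.br_of_mem_e_one hf (hL2 (br_mem_bspan_top _ _)),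
    hbr.br_one_zero, hbr.br_e_two_right hleib, zero_add] at h0
  have h1 := hleib x (e 1) X₁
  rw [hX.br_of_mem_X₁ hf hn, hbr.br_of_mem_e_one hf (hL2 (br_mem_bspan_top _ _)), hX.1 1,
    if_pos rfl, map_zero, add_zero] at h1
  have hc1 : f 1 (br x (e 1)) = 0 := (hf.smul_eq_zero_iff 2).1 h0
  have hc0 : f 0 (br x (e 1)) = 0 := by simpa [hf _ _] using congrArg (f 0) h1
  have hc2 : f 2 (br x (e 1)) = 0 := by simpa [hf _ _] using congrArg (f 2) h1
  rw [hf.eq_of_mem_span hn, hc0, hc1, hc2]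
  simp

theorem IsDiagonalPair.br_right_of_mem (hX : IsDiagonalPair br e X₁ X₂) (hleib : IsLeibniz br)
    (hbr : IsFrame br e) (hf : IsDualFamily f e) (hL2 : bspan br ⊤ ⊤ ≤ span ℂ (Set.range e))
    (x : L) {n : L} (hn : n ∈ span ℂ (Set.range e)) : br x n = f 0 n • br x (e 0) := by
  conv_lhs => rw [hf.eq_of_mem_span hn]
  simp [hX.br_e_one_right hleib hbr hf hL2, hbr.br_e_two_right hleib]

theorem IsDiagonalPair.f_one_br_X₁ (hX : IsDiagonalPair br e X₁ X₂) (hleib : IsLeibniz br)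
    (hbr : IsFrame br e) (hf : IsDualFamily f e) (hL2 : bspan br ⊤ ⊤ ≤ span ℂ (Set.range e))
    (x : L) : f 1 (br x X₁) = 0 := by
  have h := congrArg (f 2) (hleib x (e 0) X₁)
  rw [hX.br_of_mem_X₁ hf (hL2 (br_mem_bspan_top _ _)),
    hbr.br_of_mem_e_zero hf (hL2 (br_mem_bspan_top _ _)), hX.1 0, if_neg (by decide)] at h
  simpa [hf _ _] using h

theorem IsDiagonalPair.br_e_zero_right (hX : IsDiagonalPair br e X₁ X₂) (hleib : IsLeibniz br)
    (hbr : IsFrame br e) (hf : IsDualFamily f e) (hL2 : bspan br ⊤ ⊤ ≤ span ℂ (Set.range e))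
    (x : L) : br x (e 0) = -f 0 (br (e 0) x) • e 0 + f 1 (br x X₂) • e 2 := by
  have hn := hL2 (br_mem_bspan_top x (e 0))
  have h₁ := congrArg (f 1) (hleib x (e 0) X₁)
  rw [hX.br_of_mem_X₁ hf hn, hbr.br_of_mem_e_zero hf (hL2 (br_mem_bspan_top _ _)), hX.1 0,
    if_neg (by decide)] at h₁
  have h₂ := congrArg (f 2) (hleib x (e 0) X₂)
  rw [hX.br_of_mem_X₂ hf hn, hbr.br_of_mem_e_zero hf (hL2 (br_mem_bspan_top _ _)), hX.2 0,
    if_pos rfl, map_zero, add_zero] at h₂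
  have hK := hleib.br_br_add_br_swap (e 1) x (e 0)
  rw [map_add, hbr.br_e_one_of_mem hf hn,
    hbr.br_e_one_of_mem hf (hL2 (br_mem_bspan_top _ _)), ← add_smul] at hK
  have hc0 : f 0 (br x (e 0)) = -f 0 (br (e 0) x) :=
    eq_neg_of_add_eq_zero_left ((hf.smul_eq_zero_iff 2).1 hK)
  have hc1 : f 1 (br x (e 0)) = 0 := by simpa [hf _ _] using h₁.symm
  have hc2 : f 2 (br x (e 0)) = f 1 (br x X₂) := by simpa [hf _ _] using h₂
  rw [hf.eq_of_mem_span hn, hc0, hc1, hc2, zero_smul, add_zero]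

theorem IsDiagonalPair.f_two_br_X₁_eq (hX : IsDiagonalPair br e X₁ X₂) (hleib : IsLeibniz br)
    (hbr : IsFrame br e) (hf : IsDualFamily f e) (hL2 : bspan br ⊤ ⊤ ≤ span ℂ (Set.range e))
    (x : L) : f 2 (br x X₁) = f 2 (br x X₂) := by
  have h := congrArg (f 2) (hleib x X₁ X₂)
  rw [hX.br_of_mem_X₂ hf (hL2 (br_mem_bspan_top _ _)),
    hX.br_of_mem_X₁ hf (hL2 (br_mem_bspan_top _ _)),
    hX.br_right_of_mem hleib hbr hf hL2 x (hL2 (br_mem_bspan_top _ _)),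
    hbr.f_zero_br_eq_zero hleib hf hL2 hX.exists_br_e_one_X₁ hX.exists_br_e_one_X₂] at h
  simpa [hf _ _] using h

theorem IsDiagonalPair.br_sub_eq_zero (hX : IsDiagonalPair br e X₁ X₂) (hleib : IsLeibniz br)
    (hbr : IsFrame br e) (hf : IsDualFamily f e) (hL2 : bspan br ⊤ ⊤ ≤ span ℂ (Set.range e))
    {x : L} (hx : ∃ b : ℂ, br (e 1) x = b • e 1) :
    br (x - f 1 (br x X₂) • e 1 - f 2 (br x X₁) • e 2) X₁ = 0 ∧
      br (x - f 1 (br x X₂) • e 1 - f 2 (br x X₁) • e 2) X₂ = 0 := by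
  have h₀₁ := hbr.f_zero_br_eq_zero hleib hf hL2 hx hX.exists_br_e_one_X₁
  have h₀₂ := hbr.f_zero_br_eq_zero hleib hf hL2 hx hX.exists_br_e_one_X₂
  have h₁₁ := hX.f_one_br_X₁ hleib hbr hf hL2 x
  have h₂ := hX.f_two_br_X₁_eq hleib hbr hf hL2 x
  set c := f 1 (br x X₂)
  set w := f 2 (br x X₁)
  have hx₁ : br x X₁ = w • e 2 := by
    conv_lhs => rw [hf.eq_of_mem_span (hL2 (br_mem_bspan_top _ _)), h₀₁, h₁₁, zero_smul,
      zero_smul, zero_add, zero_add]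
  have hx₂ : br x X₂ = c • e 1 + w • e 2 := by
    conv_lhs => rw [hf.eq_of_mem_span (hL2 (br_mem_bspan_top _ _)), h₀₂, ← h₂, zero_smul,
      zero_add]
  simp [hx₁, hx₂, hX.1 _, hX.2 _]

theorem IsDiagonalPair.exists_br_eq_zero (hX : IsDiagonalPair br e X₁ X₂) (hleib : IsLeibniz br)
    (hbr : IsFrame br e) (hf : IsDualFamily f e)
    (hL2 : bspan br ⊤ ⊤ ≤ span ℂ (Set.range e)) : ∃ Y₁ Y₂, IsDiagonalPair br e Y₁ Y₂ ∧
      br Y₁ Y₁ = 0 ∧ br Y₁ Y₂ = 0 ∧ br Y₂ Y₁ = 0 ∧ br Y₂ Y₂ = 0 := by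
  obtain ⟨h₁₁, h₁₂⟩ := hX.br_sub_eq_zero hleib hbr hf hL2 hX.exists_br_e_one_X₁
  obtain ⟨h₂₁, h₂₂⟩ := hX.br_sub_eq_zero hleib hbr hf hL2 hX.exists_br_e_one_X₂
  have he₁ := hX.br_e_one_right hleib hbr hf hL2
  have he₂ := hbr.br_e_two_right hleib
  refine ⟨X₁ - f 1 (br X₁ X₂) • e 1 - f 2 (br X₁ X₁) • e 2,
    X₂ - f 1 (br X₂ X₂) • e 1 - f 2 (br X₂ X₁) • e 2,
    ⟨fun i => ?_, fun i => ?_⟩, ?_, ?_, ?_, ?_⟩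
  · simpa [hbr _ _] using hX.1 i
  · simpa [hbr _ _] using hX.2 i
  all_goals rw [map_sub, map_sub, map_smul, map_smul, he₁, he₂, smul_zero, smul_zero, sub_zero,
    sub_zero]
  exacts [h₁₁, h₁₂, h₂₁, h₂₂]

theorem IsDiagonalPair.br_eq_table17 (hX : IsDiagonalPair br e X₁ X₂) (hleib : IsLeibniz br)
    (hbr : IsFrame br e) (hf : IsDualFamily f e) (hL2 : bspan br ⊤ ⊤ ≤ span ℂ (Set.range e))
    (h₁₁ : br X₁ X₁ = 0) (h₁₂ : br X₁ X₂ = 0) (h₂₁ : br X₂ X₁ = 0) (h₂₂ : br X₂ X₂ = 0)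
    (i j : Fin 5) :
    br (![e 0, e 1, e 2, X₁, X₂] i) (![e 0, e 1, e 2, X₁, X₂] j) =
      table17 ![e 0, e 1, e 2, X₁, X₂] i j := by
  have hX₁ : br X₁ (e 0) = -e 0 := by
    simp [hX.br_e_zero_right hleib hbr hf hL2, hX.1 0, h₁₂, hf _ _]
  have hX₂ : br X₂ (e 0) = 0 := by
    simp [hX.br_e_zero_right hleib hbr hf hL2, hX.2 0, h₂₂]
  have he₁ := hX.br_e_one_right hleib hbr hf hL2
  have he₂ := hbr.br_e_two_right hleib
  fin_cases i <;> fin_cases j <;>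
    simp [table17, hbr _ _, hX.1 _, hX.2 _, hX₁, hX₂, he₁, he₂, h₁₁, h₁₂, h₂₁, h₂₂]

end DiagonalPair

theorem linearIndependent_of_table17 {br : Bil L} {v : Fin 5 → L}
    (hv : ∀ i j, br (v i) (v j) = table17 v i j) (hli : LinearIndependent ℂ ![v 0, v 1, v 2]) :
    LinearIndependent ℂ v := by
  have hind (a b c : ℂ) (h : a • v 0 + b • v 1 + c • v 2 = 0) : a = 0 ∧ b = 0 ∧ c = 0 := by
    have := Fintype.linearIndependent_iff.1 hli ![a, b, c] (by simpa [Fin.sum_univ_three] using h)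
    exact ⟨this 0, this 1, this 2⟩
  rw [Fintype.linearIndependent_iff]
  intro g hg
  rw [Fin.sum_univ_five] at hg
  have h₀ := congrArg (br (v 0)) hg
  have h₁ := congrArg (br (v 1)) hg
  have h₂ := congrArg (fun x => br x (v 0)) hg
  simp [hv, table17] at h₀ h₁ h₂
  have hg₃ : g 3 = 0 := h₀.resolve_right (by simpa using hli.ne_zero 0)
  obtain ⟨-, hg₄, hg₀⟩ := hind 0 (g 4) (g 0) (by linear_combination (norm := module) h₁)
  rw [hg₃, zero_smul, neg_zero, add_zero] at h₂
  obtain ⟨-, -, hg₁⟩ := hind 0 0 (g 1) (by linear_combination (norm := module) h₂)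
  rw [hg₀, hg₁, hg₃, hg₄] at hg
  obtain ⟨-, -, hg₂⟩ := hind 0 0 (g 2) (by linear_combination (norm := module) hg)
  intro i
  fin_cases i <;> assumption

/-- Proposition 5.7. A `5`-dimensional complex solvable Leibniz algebra
whose nilradical is the `3`-dimensional algebra with the single product `[e₂,e₁] = e₃`
admits a basis `{e₁, e₂, e₃, x₁, x₂}` realizing the table of Proposition 5.7. -/
theorem stmt17 {L : Type u} [AddCommGroup L] [Module ℂ L] [FiniteDimensional ℂ L]
    (br3 : Bil (Fin 3 → ℂ))
    (hbr3 : ∀ i j : Fin 3, br3 (Pi.single i 1) (Pi.single j 1) =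
      if i = 1 ∧ j = 0 then Pi.single (2 : Fin 3) 1 else 0)
    (br : Bil L) (hleib : IsLeibniz br) (hsolv : IsSolvableSub br (⊤ : Submodule ℂ L))
    (hdim : finrank ℂ L = 5)
    (N : Submodule ℂ L) (hN : IsNilradical br N)
    (hiso : SubAlgIso br3 ⊤ br N) :
    ∃ v : Fin 5 → L,
      LinearIndependent ℂ v ∧ Submodule.span ℂ (Set.range v) = ⊤ ∧
      ∀ i j : Fin 5, br (v i) (v j) = table17 v i j := by
  obtain ⟨e, hli, rfl, hbr⟩ := exists_isFrame_of_subAlgIso hbr3 hiso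
  obtain ⟨f, hf⟩ := exists_isDualFamily hli
  have hdimN : finrank ℂ L = finrank ℂ (span ℂ (Set.range e)) + 2 := by
    rw [finrank_span_eq_card hli, Fintype.card_fin, hdim]
  have hL2 := bspan_top_le_of_isSolvableSub hleib hsolv hbr hf hN hdimN
  obtain ⟨c, X₁, X₂, hX⟩ := exists_isDiagonalPair hleib hbr hf hN.1 hL2
    (frameWeight_surjective hleib hsolv hbr hf hN hdimN)
  have hli' := hli.shift c
  obtain ⟨f', hf'⟩ := exists_isDualFamily hli'
  have hL2' := hL2.trans (span_range_shift c).ge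
  have hbr' := hbr.shift c
  obtain ⟨Y₁, Y₂, hY, h₁₁, h₁₂, h₂₁, h₂₂⟩ := hX.exists_br_eq_zero hleib hbr' hf' hL2'
  have hv := hY.br_eq_table17 hleib hbr' hf' hL2' h₁₁ h₁₂ h₂₁ h₂₂
  have hvli := linearIndependent_of_table17 hv (by simpa using hli')
  exact ⟨_, hvli, hvli.span_eq_top_of_card_eq_finrank (by simp [hdim]), hv⟩
end
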